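/- arXiv:1209.0587 — 2 statements merged into one kernel-verified Lean document; each statement's English description precedes it below -/
import Mathlib

section
/- Let S be a Hausdorff topological semigroup (multiplication jointly continuous) containing 𝓘↗∞(ℤ) as a dense subsemigroup whose subspace topology is discrete. If the remainder I = S ∖ 𝓘↗∞(ℤ) is nonempty, then I is a two-sided ideal of S: for all s ∈ S and a ∈ I, both s·a ∈ I and a·s ∈ I. -/
/-- A monotone injective partial self-map of `ℤ` with cofinite domain and cofinite range,
encoded as a function `ℤ → Option ℤ` where `none` means "undefined". -/
structure IsMIP (f : ℤ → Option ℤ) : Prop where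
  inj : ∀ ⦃x y a : ℤ⦄, f x = some a → f y = some a → x = y
  mono : ∀ ⦃x y a b : ℤ⦄, f x = some a → f y = some b → x ≤ y → a ≤ b
  cofin_dom : {x : ℤ | f x = none}.Finite
  cofin_ran : {y : ℤ | ∀ x : ℤ, f x ≠ some y}.Finite

/-- The monoid `𝓘↗∞(ℤ)` of monotone injective partial self-maps of `ℤ`
with cofinite domain and cofinite range. -/
def IZ : Type := {f : ℤ → Option ℤ // IsMIP f}

namespace IZ

/-- Composition of partial maps, written left-to-right: `(pcomp f g) x = g (f x)`. -/
def pcomp (f g : ℤ → Option ℤ) : ℤ → Option ℤ := fun x => (f x).bind g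

theorem isMIP_id : IsMIP (fun x : ℤ => some x) := by
  refine ⟨?_, ?_, ?_, ?_⟩
  · intro x y a hx hy; simp_all
  · intro x y a b hx hy h; simp_all
  · simp
  · have : {y : ℤ | ∀ x : ℤ, (fun x : ℤ => some x) x ≠ some y} = ∅ := by
      ext y; simp
    rw [this]; exact Set.finite_empty

theorem isMIP_comp {f g : ℤ → Option ℤ} (hf : IsMIP f) (hg : IsMIP g) :
    IsMIP (pcomp f g) := by
  refine ⟨?_, ?_, ?_, ?_⟩
  · intro x y a hx hy
    rw [pcomp, Option.bind_eq_some_iff] at hx hy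
    obtain ⟨b, hb, hba⟩ := hx
    obtain ⟨c, hc, hca⟩ := hy
    have hbc : b = c := hg.inj hba hca
    subst hbc
    exact hf.inj hb hc
  · intro x y a b hx hy hxy
    rw [pcomp, Option.bind_eq_some_iff] at hx hy
    obtain ⟨p, hp, hpa⟩ := hx
    obtain ⟨q, hq, hqb⟩ := hy
    exact hg.mono hpa hqb (hf.mono hp hq hxy)
  · have hsub : {x : ℤ | pcomp f g x = none} ⊆
        {x : ℤ | f x = none} ∪ f ⁻¹' (Option.some '' {a : ℤ | g a = none}) := by
      intro x hx
      simp only [Set.mem_setOf_eq, pcomp] at hx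
      cases hfx : f x with
      | none => exact Or.inl hfx
      | some a =>
        right
        rw [hfx] at hx
        simp only [Option.bind_some] at hx
        exact ⟨a, hx, hfx.symm⟩
    refine Set.Finite.subset (Set.Finite.union hf.cofin_dom ?_) hsub
    refine Set.Finite.preimage ?_ (hg.cofin_dom.image _)
    intro x hx y hy hxy
    obtain ⟨a, _, ha⟩ := hx
    obtain ⟨b, _, hb⟩ := hy
    have hfa : f x = some a := ha.symm
    have hfb : f y = some b := hb.symm
    have : some a = some b := by rw [← hfa, ← hfb, hxy]
    rw [Option.some_inj] at this
    subst this
    exact hf.inj hfa hfb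
  · have hsub : {y : ℤ | ∀ x : ℤ, pcomp f g x ≠ some y} ⊆
        {y : ℤ | ∀ x : ℤ, g x ≠ some y} ∪
          ((fun a => (g a).getD 0) '' {a : ℤ | ∀ x : ℤ, f x ≠ some a}) := by
      intro y hy
      simp only [Set.mem_setOf_eq] at hy
      by_cases hgy : ∀ a : ℤ, g a ≠ some y
      · exact Or.inl hgy
      · push_neg at hgy
        obtain ⟨a, hga⟩ := hgy
        right
        refine ⟨a, ?_, by simp [hga]⟩
        intro x hfx
        exact hy x (by simp [pcomp, hfx, hga])
    exact Set.Finite.subset (Set.Finite.union hg.cofin_ran (hf.cofin_ran.image _)) hsub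

instance : Monoid IZ where
  one := ⟨fun x => some x, isMIP_id⟩
  mul a b := ⟨pcomp a.1 b.1, isMIP_comp a.2 b.2⟩
  mul_assoc a b c := by
    apply Subtype.ext
    funext x
    exact Option.bind_assoc (a.1 x) b.1 c.1
  one_mul a := by
    apply Subtype.ext
    funext x
    rfl
  mul_one a := by
    apply Subtype.ext
    funext x
    show (a.1 x).bind some = a.1 x
    cases a.1 x <;> rfl

theorem mul_def (a b : IZ) : (a * b).1 = pcomp a.1 b.1 := rfl

theorem one_def : (1 : IZ).1 = fun x : ℤ => some x := rfl

/-- The domain of an element of `𝓘↗∞(ℤ)`. -/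
def dom (a : IZ) : Set ℤ := {x : ℤ | a.1 x ≠ none}

/-- The range of an element of `𝓘↗∞(ℤ)`. -/
def ran (a : IZ) : Set ℤ := {y : ℤ | ∃ x : ℤ, a.1 x = some y}

end IZ

/-!
A point `a` of the remainder is not isolated from the dense set `𝓘↗∞(ℤ)`, so each of its
neighbourhoods contains infinitely many elements of `𝓘↗∞(ℤ)`. If `s * a` were an element `c` of
`𝓘↗∞(ℤ)`, isolate `c` by an open set `U`; joint continuity gives neighbourhoods `V ∋ s`, `W ∋ a`
with `V * W ⊆ U`, and picking `x ∈ V ∩ 𝓘↗∞(ℤ)` every `y ∈ W ∩ 𝓘↗∞(ℤ)` solves `x * y = c`.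
That equation has only finitely many solutions `y`: it fixes `y` on the cofinite set `ran x`, and
monotonicity then confines the finitely many remaining values of `y`. The case `a * s` is
symmetric: `y * x = c` fixes `y` on the cofinite set `dom c`, since `x` is injective.
-/

open Set Filter Topology

namespace IZ

theorem finite_compl_dom (a : IZ) : a.domᶜ.Finite :=
  a.2.cofin_dom.subset fun x hx => by simpa [dom] using hx

theorem finite_compl_ran (a : IZ) : a.ranᶜ.Finite :=
  a.2.cofin_ran.subset fun y hy => by simpa [ran] using hy

theorem exists_lt_apply_eq_some (a : IZ) (m : ℤ) : ∃ v < m, ∃ z, a.1 v = some z := by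
  obtain ⟨v, hvm, hv⟩ := ((Iio_infinite m).sdiff a.finite_compl_dom).nonempty
  exact ⟨v, hvm, Option.ne_none_iff_exists'.mp (not_not.mp hv)⟩

theorem exists_gt_apply_eq_some (a : IZ) (m : ℤ) : ∃ v > m, ∃ z, a.1 v = some z := by
  obtain ⟨v, hvm, hv⟩ := ((Ioi_infinite m).sdiff a.finite_compl_dom).nonempty
  exact ⟨v, hvm, Option.ne_none_iff_exists'.mp (not_not.mp hv)⟩

theorem finite_setOf_eqOn_compl {F : Set ℤ} (hF : F.Finite) (y₀ : IZ) :
    {y : IZ | EqOn y.1 y₀.1 Fᶜ}.Finite := by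
  obtain ⟨m, hm⟩ := hF.bddBelow
  obtain ⟨M, hM⟩ := hF.bddAbove
  obtain ⟨v₁, hv₁, a, ha⟩ := y₀.exists_lt_apply_eq_some m
  obtain ⟨v₂, hv₂, b, hb⟩ := y₀.exists_gt_apply_eq_some M
  have hv₁F : v₁ ∉ F := fun h => (hm h).not_gt hv₁
  have hv₂F : v₂ ∉ F := fun h => (hM h).not_gt hv₂
  -- on `F`, monotonicity squeezes every value of `y` between `a = y v₁` and `b = y v₂`
  have hvalues : ∀ y ∈ {y : IZ | EqOn y.1 y₀.1 Fᶜ}, ∀ u ∈ F,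
      y.1 u ∈ insert none (some '' Icc a b) := by
    intro y hy u hu
    cases hyu : y.1 u with
    | none => exact mem_insert _ _
    | some z =>
      have hya : y.1 v₁ = some a := (hy hv₁F).trans ha
      have hyb : y.1 v₂ = some b := (hy hv₂F).trans hb
      refine mem_insert_of_mem _ ⟨z, ⟨?_, ?_⟩, rfl⟩
      · exact y.2.mono hya hyu (hv₁.trans_le (hm hu)).le
      · exact y.2.mono hyu hyb ((hM hu).trans_lt hv₂).le
  have : Finite F := hF.to_subtype
  refine Finite.of_finite_image (f := fun y : IZ => F.domRestrict y.1) ?_ ?_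
  · refine (Finite.pi fun _ => ((finite_Icc a b).image some).insert none).subset ?_
    rintro _ ⟨y, hy, rfl⟩ u -
    exact hvalues y hy u u.2
  · intro y hy y' hy' hyy'
    apply Subtype.ext
    funext u
    by_cases hu : u ∈ F
    · exact congrFun hyy' ⟨u, hu⟩
    · exact (hy hu).trans (hy' hu).symm

theorem eqOn_ran_of_mul_left_eq {x y y' : IZ} (h : x * y = x * y') : EqOn y.1 y'.1 x.ran := by
  rintro u ⟨t, ht⟩
  have := congrFun (congrArg Subtype.val h) t
  simpa [mul_def, pcomp, ht] using this

theorem eqOn_dom_of_mul_right_eq {x y y' c : IZ} (h : y * x = c) (h' : y' * x = c) :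
    EqOn y.1 y'.1 c.dom := by
  intro u hu
  obtain ⟨v, hv⟩ := Option.ne_none_iff_exists'.mp hu
  have hyv : (y.1 u).bind x.1 = some v := by rw [← hv, ← h]; rfl
  have hy'v : (y'.1 u).bind x.1 = some v := by rw [← hv, ← h']; rfl
  obtain ⟨p, hp, hpv⟩ := Option.bind_eq_some_iff.mp hyv
  obtain ⟨q, hq, hqv⟩ := Option.bind_eq_some_iff.mp hy'v
  rw [hp, hq, x.2.inj hpv hqv]

theorem finite_setOf_mul_left_eq (x c : IZ) : {y : IZ | x * y = c}.Finite := by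
  rcases eq_empty_or_nonempty {y : IZ | x * y = c} with h | ⟨y₀, hy₀⟩
  · simp [h]
  · refine (finite_setOf_eqOn_compl x.finite_compl_ran y₀).subset fun y hy => ?_
    simpa using eqOn_ran_of_mul_left_eq (hy.trans hy₀.symm)

theorem finite_setOf_mul_right_eq (x c : IZ) : {y : IZ | y * x = c}.Finite := by
  rcases eq_empty_or_nonempty {y : IZ | y * x = c} with h | ⟨y₀, hy₀⟩
  · simp [h]
  · refine (finite_setOf_eqOn_compl c.finite_compl_dom y₀).subset fun y hy => ?_
    simpa using eqOn_dom_of_mul_right_eq hy hy₀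

end IZ

theorem Dense.infinite_inter_of_mem_nhds {X : Type*} [TopologicalSpace X] [T1Space X]
    {D W : Set X} {a : X} (hD : Dense D) (ha : a ∉ D) (hW : W ∈ 𝓝 a) : (W ∩ D).Infinite := by
  have hacc : AccPt a (𝓟 D) := accPt_iff_nhds.mpr fun U hU => by
    obtain ⟨y, hyD, hyU⟩ := hD.inter_nhds_nonempty hU
    exact ⟨y, ⟨hyU, hyD⟩, fun hya => ha (hya ▸ hyD)⟩
  exact Infinite.of_accPt (hacc.nhds_inter hW)

theorem Continuous.apply_notMem_of_finite_preimage {X Y Z : Type*} [TopologicalSpace X]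
    [TopologicalSpace Y] [T1Space Y] [TopologicalSpace Z] {f : X × Y → Z} (hf : Continuous f)
    {A : Set X} {B : Set Y} (hA : Dense A) (hB : Dense B) {U : Set Z} (hU : IsOpen U)
    (hfin : ∀ x ∈ A, {y ∈ B | f (x, y) ∈ U}.Finite) (s : X) {a : Y} (ha : a ∉ B) :
    f (s, a) ∉ U := by
  intro hsa
  obtain ⟨V, W, hV, hW, hsV, haW, hVW⟩ := isOpen_prod_iff.mp (hU.preimage hf) s a hsa
  obtain ⟨x, hxV, hxA⟩ := hA.inter_open_nonempty V hV ⟨s, hsV⟩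
  refine (hB.infinite_inter_of_mem_nhds ha (hW.mem_nhds haW)) ((hfin x hxA).subset ?_)
  exact fun y ⟨hyW, hyB⟩ => ⟨hyB, hVW ⟨hxV, hyW⟩⟩

theorem apply₂_notMem_range_of_finite_fibers {M X : Type*} [TopologicalSpace X] [T1Space X]
    {μ : X → X → X} (hμ : Continuous (Function.uncurry μ)) {m : M → M → M} {e : M → X}
    (hinj : Function.Injective e) (hhom : ∀ x y, e (m x y) = μ (e x) (e y))
    (hdense : Dense (range e)) (hdisc : DiscreteTopology (range e))
    (hfin : ∀ x c, {y | m x y = c}.Finite) (s : X) {a : X} (ha : a ∉ range e) :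
    μ s a ∉ range e := by
  rintro ⟨c, hc⟩
  obtain ⟨U, hU, hUc⟩ := discreteTopology_subtype_iff'.mp hdisc (e c) (mem_range_self c)
  have hcU : e c ∈ U := (hUc.ge rfl).1
  refine hμ.apply_notMem_of_finite_preimage hdense hdense hU ?_ s ha
    (show μ s a ∈ U from hc ▸ hcU)
  rintro _ ⟨x, rfl⟩
  refine ((hfin x c).image e).subset ?_
  rintro _ ⟨⟨y, rfl⟩, hy⟩
  have hxy : e (m x y) ∈ U ∩ range e := ⟨(hhom x y).symm ▸ hy, mem_range_self _⟩
  exact ⟨y, hinj (hUc.le hxy), rfl⟩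

theorem statement18_general (S : Type*) [Semigroup S] [TopologicalSpace S] [T2Space S]
    (hc : Continuous fun p : S × S => p.1 * p.2)
    (e : IZ → S) (hinj : Function.Injective e)
    (hhom : ∀ a b : IZ, e (a * b) = e a * e b)
    (hdense : Dense (Set.range e))
    (hdisc : DiscreteTopology (Set.range e)) :
    ∀ s : S, ∀ a ∈ (Set.range e)ᶜ, s * a ∈ (Set.range e)ᶜ ∧ a * s ∈ (Set.range e)ᶜ := by
  intro s a ha
  exact ⟨apply₂_notMem_range_of_finite_fibers hc hinj hhom hdense hdisc
      IZ.finite_setOf_mul_left_eq s ha,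
    apply₂_notMem_range_of_finite_fibers (μ := fun x y => y * x) (hc.comp continuous_swap) hinj
      (fun x y => hhom y x) hdense hdisc IZ.finite_setOf_mul_right_eq s ha⟩

/-- If a Hausdorff topological semigroup `S` contains `𝓘↗∞(ℤ)` as a dense
subsemigroup whose subspace topology is discrete, and the remainder
`I = S \ 𝓘↗∞(ℤ)` is nonempty, then `I` is a two-sided ideal of `S`. -/
theorem statement18 (S : Type*) [Semigroup S] [TopologicalSpace S] [T2Space S]
    (hc : Continuous fun p : S × S => p.1 * p.2)
    (e : IZ → S) (hinj : Function.Injective e)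
    (hhom : ∀ a b : IZ, e (a * b) = e a * e b)
    (hdense : Dense (Set.range e))
    (hdisc : DiscreteTopology (Set.range e))
    (hne : (Set.range e)ᶜ.Nonempty) :
    ∀ s : S, ∀ a ∈ (Set.range e)ᶜ, s * a ∈ (Set.range e)ᶜ ∧ a * s ∈ (Set.range e)ᶜ :=
  statement18_general S hc e hinj hhom hdense hdisc
end

section
/- Let τ_W be the topology on 𝓘↗∞(ℤ) generated by the base consisting of all sets U_α(F) = {β ∈ 𝓘↗∞(ℤ) : dom β ⊆ dom α and β(x) = α(x) for all x ∈ F}, where α ∈ 𝓘↗∞(ℤ) and F ranges over the finite subsets of dom α. Then (𝓘↗∞(ℤ), τ_W) is a Tychonoff (completely regular Hausdorff) topological inverse semigroup: the multiplication (α, β) ↦ α·β is jointly continuous and the inversion α ↦ α⁻¹ (the inverse partial bijection) is continuous with respect to τ_W. -/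
/-!
Since `dom α` is cofinite, `U_α(F)` is the set of `β` agreeing with `α` (values and
undefinedness alike) on the finite set `F ∪ (ℤ ∖ dom α)`. Hence `τ_W` is the topology of
pointwise convergence for `β ↦ β x ∈ Option ℤ`, the latter discrete: a filter converges to `α`
iff for every `x` the value at `x` is eventually `α x`. The basic sets are then clopen, which gives
Hausdorffness and complete regularity, and `(αβ) x` depends only on `α x` and `β (α x)`, which
gives continuity of multiplication. For inversion, a point `y ∉ ran α` lies in a gap
`α x₁ < y < α x₂` with no point of `dom α` strictly between `x₁` and `x₂`; by monotonicity every
`α'` with `dom α' ⊆ dom α` agreeing with `α` at `x₁, x₂` misses `y` as well.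
-/

open Filter Topology TopologicalSpace

theorem IsMIP.le_iff_le {f : ℤ → Option ℤ} (hf : IsMIP f) {x y a b : ℤ} (hx : f x = some a)
    (hy : f y = some b) : x ≤ y ↔ a ≤ b := by
  refine ⟨hf.mono hx hy, fun hab => le_of_not_gt fun hyx => ?_⟩
  have hba : b ≤ a := hf.mono hy hx hyx.le
  obtain rfl : a = b := le_antisymm hab hba
  exact hyx.ne (hf.inj hy hx)

namespace IZ

theorem mul_apply (α β : IZ) (x : ℤ) : (α * β).1 x = (α.1 x).bind β.1 := rfl

theorem mem_dom {α : IZ} {x : ℤ} : x ∈ dom α ↔ α.1 x ≠ none := Iff.rfl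

theorem finite_compl_dom_s19 (α : IZ) : (dom α)ᶜ.Finite :=
  α.2.cofin_dom.subset fun _ hx => not_not.mp hx

theorem finite_compl_ran_s19 (α : IZ) : (ran α)ᶜ.Finite :=
  α.2.cofin_ran.subset fun _ hy x hx => hy ⟨x, hx⟩

theorem exists_mem_ran_of_infinite (α : IZ) {S : Set ℤ} (hS : S.Infinite) : ∃ a ∈ S, a ∈ ran α :=
  let ⟨a, haS, ha⟩ := (hS.sdiff α.finite_compl_ran_s19).nonempty
  ⟨a, haS, not_not.mp ha⟩

theorem exists_gap_of_notMem_ran {α : IZ} {y : ℤ} (hy : y ∉ ran α) :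
    ∃ x₁ a₁ x₂ a₂, α.1 x₁ = some a₁ ∧ a₁ < y ∧ α.1 x₂ = some a₂ ∧ y < a₂ ∧
      ∀ x ∈ dom α, x ≤ x₁ ∨ x₂ ≤ x := by
  obtain ⟨a₀, ha₀y, x₀, hx₀⟩ := α.exists_mem_ran_of_infinite (Set.Iio_infinite y)
  obtain ⟨b₀, hyb₀, z₀, hz₀⟩ := α.exists_mem_ran_of_infinite (Set.Ioi_infinite y)
  have below_bdd : ∀ x, (∃ a, α.1 x = some a ∧ a < y) → x ≤ z₀ := fun x ⟨a, hx, hay⟩ =>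
    (α.2.le_iff_le hx hz₀).mpr (hay.trans hyb₀).le
  have above_bdd : ∀ x, (∃ b, α.1 x = some b ∧ y < b) → x₀ ≤ x := fun x ⟨b, hx, hyb⟩ =>
    (α.2.le_iff_le hx₀ hx).mpr (ha₀y.trans hyb).le
  obtain ⟨x₁, ⟨a₁, hx₁, ha₁y⟩, hx₁_max⟩ :=
    Int.exists_greatest_of_bdd ⟨z₀, below_bdd⟩ ⟨x₀, a₀, hx₀, ha₀y⟩
  obtain ⟨x₂, ⟨a₂, hx₂, hya₂⟩, hx₂_min⟩ :=
    Int.exists_least_of_bdd ⟨x₀, above_bdd⟩ ⟨z₀, b₀, hz₀, hyb₀⟩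
  refine ⟨x₁, a₁, x₂, a₂, hx₁, ha₁y, hx₂, hya₂, fun x hx => ?_⟩
  obtain ⟨b, hb⟩ := Option.ne_none_iff_exists'.mp hx
  rcases lt_trichotomy b y with hby | rfl | hyb
  · exact .inl (hx₁_max x ⟨b, hb, hby⟩)
  · exact absurd ⟨x, hb⟩ hy
  · exact .inr (hx₂_min x ⟨b, hb, hyb⟩)

def basicSet (α : IZ) (F : Finset ℤ) : Set IZ :=
  {β : IZ | dom β ⊆ dom α ∧ ∀ x ∈ F, β.1 x = α.1 x}

/-- The topology `τ_W`. -/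
instance : TopologicalSpace IZ :=
  generateFrom {U | ∃ (α : IZ) (F : Finset ℤ), (∀ x ∈ F, α.1 x ≠ none) ∧ U = basicSet α F}

theorem isOpen_basicSet (α : IZ) {F : Finset ℤ} (hF : ∀ x ∈ F, α.1 x ≠ none) :
    IsOpen (basicSet α F) :=
  isOpen_generateFrom_of_mem ⟨α, F, hF, rfl⟩

theorem basicSet_mem_nhds (α : IZ) {F : Finset ℤ} (hF : ∀ x ∈ F, α.1 x ≠ none) :
    basicSet α F ∈ 𝓝 α :=
  (isOpen_basicSet α hF).mem_nhds ⟨subset_rfl, fun _ _ => rfl⟩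

theorem eventually_dom_subset (α : IZ) : ∀ᶠ β in 𝓝 α, dom β ⊆ dom α :=
  mem_of_superset (basicSet_mem_nhds α (F := ∅) (by simp)) fun (_ : IZ) hβ => hβ.1

theorem eventually_apply_eq (α : IZ) (x : ℤ) : ∀ᶠ β in 𝓝 α, β.1 x = α.1 x := by
  cases hx : α.1 x with
  | none =>
    filter_upwards [eventually_dom_subset α] with β hβ
    exact not_not.mp fun hβx => hβ hβx hx
  | some a =>
    filter_upwards [basicSet_mem_nhds α (F := {x}) (by simp [hx])] with β hβ
    rw [hβ.2 x (Finset.mem_singleton_self x), hx]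

theorem tendsto_nhds_iff {X : Type*} {l : Filter X} {f : X → IZ} {α : IZ} :
    Tendsto f l (𝓝 α) ↔ ∀ x, ∀ᶠ a in l, (f a).1 x = α.1 x := by
  refine ⟨fun hf x => hf.eventually (eventually_apply_eq α x), fun hf => ?_⟩
  refine tendsto_nhds_generateFrom_iff.mpr ?_
  rintro _ ⟨μ, F, -, rfl⟩ ⟨hαμ, hαF⟩
  have hfin : (↑F ∪ (dom α)ᶜ : Set ℤ).Finite := F.finite_toSet.union α.finite_compl_dom_s19
  filter_upwards [(eventually_all_finite hfin).mpr fun x _ => hf x] with a ha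
  exact ⟨fun x hx => hαμ fun hαx => hx ((ha x (.inr (not_not.mpr hαx))).trans hαx),
    fun x hx => (ha x (.inl hx)).trans (hαF x hx)⟩

theorem isClopen_setOf_apply_eq (x : ℤ) (v : Option ℤ) : IsClopen {β : IZ | β.1 x = v} := by
  have isOpen_of (p : Option ℤ → Prop) : IsOpen {β : IZ | p (β.1 x)} :=
    isOpen_iff_mem_nhds.mpr fun β hβ =>
      (eventually_apply_eq β x).mono fun _ hγ => (congrArg p hγ).mpr hβ
  exact ⟨isOpen_compl_iff.mp (isOpen_of (· ≠ v)), isOpen_of (· = v)⟩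

theorem basicSet_eq_biInter (α : IZ) (F : Finset ℤ) :
    basicSet α F = ⋂ x ∈ (↑F ∪ (dom α)ᶜ : Set ℤ), {β : IZ | β.1 x = α.1 x} := by
  ext β
  simp only [basicSet, Set.mem_ofPred_eq, Set.mem_iInter, Set.mem_union, Set.mem_compl_iff,
    mem_dom, not_not, Finset.mem_coe]
  refine ⟨fun ⟨hdom, hF⟩ x hx => hx.elim (hF x) fun hαx => ?_, fun h => ⟨fun x hβx => ?_,
    fun x hx => h x (.inl hx)⟩⟩
  · rw [hαx]; exact not_not.mp fun hβx => hdom hβx hαx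
  · exact fun hαx => hβx ((h x (.inr hαx)).trans hαx)

theorem isClopen_basicSet (α : IZ) (F : Finset ℤ) : IsClopen (basicSet α F) := by
  rw [basicSet_eq_biInter]
  exact (F.finite_toSet.union α.finite_compl_dom_s19).isClopen_biInter fun x _ =>
    isClopen_setOf_apply_eq x (α.1 x)

instance : T2Space IZ where
  t2 α β hαβ := by
    obtain ⟨x, hx⟩ : ∃ x, α.1 x ≠ β.1 x := not_forall.mp fun h => hαβ (Subtype.ext (funext h))
    have hU := isClopen_setOf_apply_eq x (α.1 x)
    exact ⟨_, _, hU.isOpen, hU.compl.isOpen, rfl, hx.symm, disjoint_compl_right⟩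

instance : CompletelyRegularSpace IZ := by
  refine .of_isTopologicalBasis_clopens <|
    (isTopologicalBasis_of_subbasis rfl).of_isOpen_of_subset (fun _ hU => hU.isOpen) ?_
  rintro _ ⟨𝒰, ⟨h𝒰, h𝒰_basic⟩, rfl⟩
  show IsClopen (⋂₀ 𝒰)
  rw [Set.sInter_eq_biInter]
  refine h𝒰.isClopen_biInter fun U hU => ?_
  obtain ⟨α, F, -, rfl⟩ := h𝒰_basic hU
  exact isClopen_basicSet α F

instance : ContinuousMul IZ where
  continuous_mul := continuous_iff_continuousAt.mpr fun ⟨α, β⟩ => tendsto_nhds_iff.mpr fun x => by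
    have hα := (continuous_fst.tendsto (α, β)).eventually (eventually_apply_eq α x)
    simp only [mul_apply]
    cases hx : α.1 x with
    | none => filter_upwards [hα] with p hp; rw [hp, hx]; rfl
    | some a =>
      have hβ := (continuous_snd.tendsto (α, β)).eventually (eventually_apply_eq β a)
      filter_upwards [hα, hβ] with p hp₁ hp₂
      rw [hp₁, hx, Option.bind_some, Option.bind_some, hp₂]

open Classical in
noncomputable def partialInv (α : IZ) (y : ℤ) : Option ℤ :=
  if h : ∃ x, α.1 x = some y then some h.choose else none

theorem partialInv_eq_some_iff {α : IZ} {x y : ℤ} : partialInv α y = some x ↔ α.1 x = some y := by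
  unfold partialInv
  split_ifs with h
  · exact Option.some_inj.trans ⟨fun hx => hx ▸ h.choose_spec, α.2.inj h.choose_spec⟩
  · exact iff_of_false (by simp) fun hx => h ⟨x, hx⟩

theorem partialInv_eq_none_iff {α : IZ} {y : ℤ} : partialInv α y = none ↔ y ∉ ran α := by
  unfold partialInv ran
  split_ifs with h <;> simpa using h

theorem isMIP_partialInv (α : IZ) : IsMIP (partialInv α) where
  inj _ _ _ hy hy' := Option.some_inj.mp
    ((partialInv_eq_some_iff.mp hy).symm.trans (partialInv_eq_some_iff.mp hy'))
  mono _ _ _ _ hy hy' hyy' :=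
    (α.2.le_iff_le (partialInv_eq_some_iff.mp hy) (partialInv_eq_some_iff.mp hy')).mpr hyy'
  cofin_dom := α.finite_compl_ran_s19.subset fun _ hy => partialInv_eq_none_iff.mp hy
  cofin_ran := α.2.cofin_dom.subset fun x hx => by
    cases hαx : α.1 x with
    | none => exact hαx
    | some y => exact absurd (partialInv_eq_some_iff.mpr hαx) (hx y)

noncomputable instance : Inv IZ := ⟨fun α => ⟨partialInv α, isMIP_partialInv α⟩⟩

theorem inv_apply (α : IZ) (y : ℤ) : α⁻¹.1 y = partialInv α y := rfl

theorem mul_inv_mul (α : IZ) : α * α⁻¹ * α = α := by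
  refine Subtype.ext (funext fun x => ?_)
  simp only [mul_apply, inv_apply]
  cases hx : α.1 x with
  | none => rfl
  | some y => rw [Option.bind_some, partialInv_eq_some_iff.mpr hx, Option.bind_some, hx]

theorem inv_mul_inv (α : IZ) : α⁻¹ * α * α⁻¹ = α⁻¹ := by
  refine Subtype.ext (funext fun y => ?_)
  simp only [mul_apply, inv_apply]
  cases hy : partialInv α y with
  | none => rfl
  | some x => rw [Option.bind_some, partialInv_eq_some_iff.mp hy, Option.bind_some, hy]

theorem eventually_notMem_ran (α : IZ) {y : ℤ} (hy : y ∉ ran α) : ∀ᶠ β in 𝓝 α, y ∉ ran β := by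
  obtain ⟨x₁, a₁, x₂, a₂, hx₁, ha₁y, hx₂, hya₂, hgap⟩ := exists_gap_of_notMem_ran hy
  filter_upwards [eventually_dom_subset α, eventually_apply_eq α x₁, eventually_apply_eq α x₂]
    with β hdom hβx₁ hβx₂
  rintro ⟨x, hβx⟩
  rcases hgap x (hdom (by simp [mem_dom, hβx])) with hxx₁ | hx₂x
  · exact (β.2.mono hβx (hβx₁.trans hx₁) hxx₁).not_gt ha₁y
  · exact (β.2.mono (hβx₂.trans hx₂) hβx hx₂x).not_gt hya₂

instance : ContinuousInv IZ where
  continuous_inv := continuous_iff_continuousAt.mpr fun α => tendsto_nhds_iff.mpr fun y => by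
    simp only [inv_apply]
    cases hy : partialInv α y with
    | none =>
      filter_upwards [eventually_notMem_ran α (partialInv_eq_none_iff.mp hy)] with β hβ
      exact partialInv_eq_none_iff.mpr hβ
    | some x =>
      filter_upwards [eventually_apply_eq α x] with β hβ
      exact partialInv_eq_some_iff.mpr (hβ.trans (partialInv_eq_some_iff.mp hy))

end IZ

/-- The topology `τ_W` on `𝓘↗∞(ℤ)` generated by the base of all sets
`U_α(F) = {β : dom β ⊆ dom α ∧ β x = α x for all x ∈ F}` (`F` a finite subset of `dom α`)
makes `𝓘↗∞(ℤ)` a Tychonoff (completely regular Hausdorff) topological inverse semigroup: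
multiplication is jointly continuous and the inversion `α ↦ α⁻¹` (characterized by
`α * α⁻¹ * α = α` and `α⁻¹ * α * α⁻¹ = α⁻¹`) is continuous. -/
theorem statement19 :
    let τW : TopologicalSpace IZ := TopologicalSpace.generateFrom
      {U : Set IZ | ∃ (α : IZ) (F : Finset ℤ), (∀ x ∈ F, α.1 x ≠ none) ∧
        U = {β : IZ | IZ.dom β ⊆ IZ.dom α ∧ ∀ x ∈ F, β.1 x = α.1 x}}
    @T2Space IZ τW ∧
    @CompletelyRegularSpace IZ τW ∧
    @Continuous (IZ × IZ) IZ (@instTopologicalSpaceProd IZ IZ τW τW) τW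
      (fun p => p.1 * p.2) ∧
    ∃ inv : IZ → IZ,
      (∀ α : IZ, α * inv α * α = α ∧ inv α * α * inv α = inv α) ∧
      @Continuous IZ IZ τW τW inv :=
  ⟨(inferInstance : T2Space IZ), (inferInstance : CompletelyRegularSpace IZ),
    (continuous_mul : Continuous fun p : IZ × IZ => p.1 * p.2), (·⁻¹),
    fun α => ⟨IZ.mul_inv_mul α, IZ.inv_mul_inv α⟩,
    (continuous_inv : Continuous fun α : IZ => α⁻¹)⟩
end
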